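/- Fix ω₀ > 0 and define, for β₂ ∈ (0, 2ω₀), the period function T(β₂; ω₀) = (2√6 / √(ρ(β₂; ω₀))) · K(k(β₂; ω₀)). Then T(β₂; ω₀) → +∞ as β₂ → 0⁺, and T(β₂; ω₀) → √2·π/√ω₀ as β₂ → (2ω₀)⁻. -/

import Mathlib

/-- The complete elliptic integral of the first kind,
`K(k) = ∫₀¹ dt / √((1 − t²)(1 − k²t²))`. -/
noncomputable def ellipticK (k : ℝ) : ℝ :=
  ∫ t in (0 : ℝ)..1, 1 / Real.sqrt ((1 - t ^ 2) * (1 - k ^ 2 * t ^ 2))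

/-- `ρ(β₂; ω₀) = √(9ω₀² − 3β₂² + 6ω₀β₂)`. -/
noncomputable def rho (ω₀ β₂ : ℝ) : ℝ :=
  Real.sqrt (9 * ω₀ ^ 2 - 3 * β₂ ^ 2 + 6 * ω₀ * β₂)

/-- The elliptic modulus `k(β₂; ω₀) ∈ (0,1)`, defined by
`k² = 1/2 + 3(ω₀ − β₂)/(2ρ(β₂; ω₀))`. -/
noncomputable def modulus (ω₀ β₂ : ℝ) : ℝ :=
  Real.sqrt (1 / 2 + 3 * (ω₀ - β₂) / (2 * rho ω₀ β₂))

/-- The period function `T(β₂; ω₀) = (2√6/√(ρ(β₂; ω₀))) K(k(β₂; ω₀))`. -/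
noncomputable def periodT (ω₀ β₂ : ℝ) : ℝ :=
  2 * Real.sqrt 6 / Real.sqrt (rho ω₀ β₂) * ellipticK (modulus ω₀ β₂)

open Filter Real

/-- Basic estimates for `t ∈ [0,1)`, `k ∈ [0,1)`. -/
lemma aux_prod_pos {k t : ℝ} (hk0 : 0 ≤ k) (hk1 : k < 1) (ht0 : 0 ≤ t) (ht1 : t < 1) :
    0 < (1 - t ^ 2) * (1 - k ^ 2 * t ^ 2) := by
  have h1 : 0 < 1 - t ^ 2 := by nlinarith
  have h2 : 0 < 1 - k ^ 2 * t ^ 2 := by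
    nlinarith [sq_nonneg (k * t), sq_nonneg (k - t), mul_nonneg hk0 ht0]
  exact mul_pos h1 h2

open MeasureTheory intervalIntegral Set in
/-- Integrability of the elliptic integrand for `0 ≤ k < 1`. -/
lemma aux_integrable {k : ℝ} (hk0 : 0 ≤ k) (hk1 : k < 1) :
    IntervalIntegrable (fun t : ℝ => 1 / Real.sqrt ((1 - t ^ 2) * (1 - k ^ 2 * t ^ 2)))
      volume 0 1 := by
  have hc : (0:ℝ) < 1 - k ^ 2 := by nlinarith
  have hg : IntervalIntegrable
      (fun t : ℝ => (1 / Real.sqrt (1 - k ^ 2)) * (1 - t) ^ (-(1/2) : ℝ)) volume 0 1 := by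
    have h := (intervalIntegral.intervalIntegrable_rpow'
      (r := (-(1/2) : ℝ)) (a := 0) (b := 1) (by norm_num)).comp_sub_left 1
    simp only [sub_zero, sub_self] at h
    exact (h.symm).const_mul _
  refine hg.mono_fun ?_ ?_
  · apply Measurable.aestronglyMeasurable
    simp only [one_div]
    exact ((Real.continuous_sqrt.comp (by continuity)).measurable).inv
  · rw [Set.uIoc_of_le (by norm_num : (0:ℝ) ≤ 1)]
    filter_upwards [ae_restrict_mem measurableSet_Ioc] with t ht
    have ht0 : 0 < t := ht.1
    have ht1 : t ≤ 1 := ht.2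
    have hnn1 : (0:ℝ) ≤ 1 / Real.sqrt ((1 - t ^ 2) * (1 - k ^ 2 * t ^ 2)) := by positivity
    have hnn2 : (0:ℝ) ≤ (1 / Real.sqrt (1 - k ^ 2)) * (1 - t) ^ (-(1/2) : ℝ) :=
      mul_nonneg (by positivity) (Real.rpow_nonneg (by linarith) _)
    rw [Real.norm_eq_abs, Real.norm_eq_abs, abs_of_nonneg hnn1, abs_of_nonneg hnn2]
    rcases eq_or_lt_of_le ht1 with h1 | h1
    · subst h1
      simp [Real.zero_rpow]
    · -- t < 1
      have h1t : 0 < 1 - t := by linarith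
      have hrw : (1 - t) ^ (-(1/2) : ℝ) = (Real.sqrt (1 - t))⁻¹ := by
        rw [Real.rpow_neg h1t.le, Real.sqrt_eq_rpow]
      rw [hrw]
      simp only [one_div]
      rw [← mul_inv, ← Real.sqrt_mul hc.le]
      have hle : (1 - k ^ 2) * (1 - t) ≤ (1 - t ^ 2) * (1 - k ^ 2 * t ^ 2) := by
        have e1 : 1 - k ^ 2 ≤ 1 - k ^ 2 * t ^ 2 := by
          nlinarith [mul_nonneg (sq_nonneg k) (by nlinarith : (0:ℝ) ≤ 1 - t ^ 2)]
        have e2 : 1 - t ≤ 1 - t ^ 2 := by nlinarith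
        calc (1 - k ^ 2) * (1 - t) ≤ (1 - k ^ 2 * t ^ 2) * (1 - t) :=
              mul_le_mul_of_nonneg_right e1 h1t.le
          _ ≤ (1 - k ^ 2 * t ^ 2) * (1 - t ^ 2) := by
              have hb : (0:ℝ) ≤ 1 - k ^ 2 * t ^ 2 := by nlinarith
              exact mul_le_mul_of_nonneg_left e2 hb
          _ = (1 - t ^ 2) * (1 - k ^ 2 * t ^ 2) := by ring
      have hpos : 0 < Real.sqrt ((1 - k ^ 2) * (1 - t)) :=
        Real.sqrt_pos.2 (by positivity)
      exact inv_anti₀ hpos (Real.sqrt_le_sqrt hle)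

open MeasureTheory intervalIntegral Set in
lemma integral_arcsin_aux : ∫ t in (0:ℝ)..1, 1 / Real.sqrt (1 - t ^ 2) = π / 2 := by
  have hint : IntervalIntegrable (fun t : ℝ => 1 / Real.sqrt (1 - t ^ 2)) volume 0 1 := by
    have := aux_integrable (k := 0) le_rfl zero_lt_one
    simpa using this
  have h := intervalIntegral.integral_eq_sub_of_hasDeriv_right_of_le (f := Real.arcsin)
      (f' := fun t => 1 / Real.sqrt (1 - t ^ 2)) zero_le_one
      Real.continuous_arcsin.continuousOn
      (fun x hx => (Real.hasDerivAt_arcsin (by linarith [hx.1]) (ne_of_lt hx.2)).hasDerivWithinAt)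
      hint
  rw [h, Real.arcsin_one, Real.arcsin_zero, sub_zero]

open MeasureTheory intervalIntegral Set in
lemma ellipticK_ge_pi_div_two {k : ℝ} (hk0 : 0 ≤ k) (hk1 : k < 1) :
    π / 2 ≤ ellipticK k := by
  have hint0 : IntervalIntegrable (fun t : ℝ => 1 / Real.sqrt (1 - t ^ 2)) volume 0 1 := by
    simpa using aux_integrable (k := 0) le_rfl zero_lt_one
  rw [← integral_arcsin_aux, ellipticK]
  apply intervalIntegral.integral_mono_on zero_le_one hint0 (aux_integrable hk0 hk1)
  intro t ht
  rcases eq_or_lt_of_le ht.2 with h1 | h1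
  · subst h1; norm_num
  · have hprod : 0 < (1 - t ^ 2) * (1 - k ^ 2 * t ^ 2) := aux_prod_pos hk0 hk1 ht.1 h1
    apply one_div_le_one_div_of_le (Real.sqrt_pos.2 hprod)
    apply Real.sqrt_le_sqrt
    have h2 : 1 - k ^ 2 * t ^ 2 ≤ 1 := by nlinarith [sq_nonneg (k * t)]
    have h3 : (0:ℝ) ≤ 1 - t ^ 2 := by nlinarith [ht.1]
    nlinarith [mul_le_of_le_one_right h3 h2]

open MeasureTheory intervalIntegral Set in
lemma ellipticK_le_ub {k : ℝ} (hk0 : 0 ≤ k) (hk1 : k < 1) :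
    ellipticK k ≤ π / 2 / Real.sqrt (1 - k ^ 2) := by
  have hc : (0:ℝ) < 1 - k ^ 2 := by nlinarith
  have hcs : 0 < Real.sqrt (1 - k ^ 2) := Real.sqrt_pos.2 hc
  have hint0 : IntervalIntegrable (fun t : ℝ => 1 / Real.sqrt (1 - t ^ 2)) volume 0 1 := by
    simpa using aux_integrable (k := 0) le_rfl zero_lt_one
  have key : ellipticK k ≤
      ∫ t in (0:ℝ)..1, (1 / Real.sqrt (1 - k ^ 2)) * (1 / Real.sqrt (1 - t ^ 2)) := by
    rw [ellipticK]
    apply intervalIntegral.integral_mono_on zero_le_one (aux_integrable hk0 hk1)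
      (hint0.const_mul _)
    intro t ht
    rcases eq_or_lt_of_le ht.2 with h1 | h1
    · subst h1; norm_num
    · have ht2 : 0 < 1 - t ^ 2 := by nlinarith [ht.1]
      rw [one_div_mul_one_div]
      apply one_div_le_one_div_of_le (by positivity)
      rw [← Real.sqrt_mul hc.le]
      apply Real.sqrt_le_sqrt
      have e1 : 1 - k ^ 2 ≤ 1 - k ^ 2 * t ^ 2 := by
        nlinarith [mul_nonneg (sq_nonneg k) ht2.le]
      calc (1 - k ^ 2) * (1 - t ^ 2) = (1 - t ^ 2) * (1 - k ^ 2) := by ring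
        _ ≤ (1 - t ^ 2) * (1 - k ^ 2 * t ^ 2) := mul_le_mul_of_nonneg_left e1 ht2.le
  calc ellipticK k ≤ _ := key
    _ = (1 / Real.sqrt (1 - k ^ 2)) * (π / 2) := by
        rw [intervalIntegral.integral_const_mul, integral_arcsin_aux]
    _ = π / 2 / Real.sqrt (1 - k ^ 2) := by ring

open MeasureTheory intervalIntegral Set in
lemma ellipticK_log_lower {k : ℝ} (hk0 : 0 ≤ k) (hk1 : k < 1) :
    1 / 2 * Real.log ((2 - k) / (1 - k)) ≤ ellipticK k := by
  have hk1' : (0:ℝ) < 1 - k := by linarith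
  have hintc : IntervalIntegrable (fun t : ℝ => 1 / (2 * (2 - k - t))) volume 0 1 := by
    apply ContinuousOn.intervalIntegrable
    apply ContinuousOn.div continuousOn_const
    · exact (Continuous.continuousOn (by continuity))
    · intro t ht
      rw [Set.uIcc_of_le (by norm_num : (0:ℝ) ≤ 1)] at ht
      have : 0 < 2 - k - t := by nlinarith [ht.1, ht.2]
      positivity
  have hval : (∫ t in (0:ℝ)..1, 1 / (2 * (2 - k - t)))
      = 1 / 2 * Real.log ((2 - k) / (1 - k)) := by
    have hrw : (fun t : ℝ => 1 / (2 * (2 - k - t)))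
        = fun t : ℝ => (1/2 : ℝ) * (1 / (2 - k - t)) := by
      funext t
      rw [one_div, mul_inv, one_div, one_div]
    rw [hrw, intervalIntegral.integral_const_mul]
    have h1 : (∫ t in (0:ℝ)..1, 1 / (2 - k - t)) = Real.log ((2 - k) / (1 - k)) := by
      have h := integral_comp_sub_left (a := (0:ℝ)) (b := 1) (fun x => 1 / x) (2 - k)
      rw [h, show (2:ℝ) - k - 1 = 1 - k by ring, show (2:ℝ) - k - 0 = 2 - k by ring]
      exact integral_one_div (Set.notMem_uIcc_of_lt hk1' (by linarith))
    rw [h1]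
  rw [← hval, ellipticK]
  apply intervalIntegral.integral_mono_ae_restrict zero_le_one hintc (aux_integrable hk0 hk1)
  have hne : ∀ᵐ t : ℝ ∂volume, t ≠ 1 := by
    rw [MeasureTheory.ae_iff]
    simp only [ne_eq, not_not]
    simpa using Real.volume_singleton (a := 1)
  filter_upwards [ae_restrict_mem measurableSet_Icc, MeasureTheory.ae_restrict_of_ae hne]
    with t ht htne
  have ht0 : 0 ≤ t := ht.1
  have ht1 : t < 1 := lt_of_le_of_ne ht.2 htne
  have hden : 0 < 2 - k - t := by nlinarith
  have hprod : 0 < (1 - t ^ 2) * (1 - k ^ 2 * t ^ 2) := aux_prod_pos hk0 hk1 ht0 ht1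
  have hkt : 0 ≤ 1 - k * t := by nlinarith [mul_nonneg hk0 ht0]
  have h1k1t : (0:ℝ) ≤ (1 - k) * (1 - t) := by nlinarith
  have hA : (1 - t ^ 2) ≤ 2 * (2 - k - t) := by nlinarith [sq_nonneg (1 - t)]
  have hB : (1 - k ^ 2 * t ^ 2) ≤ 2 * (2 - k - t) := by
    nlinarith [sq_nonneg (1 - k * t), mul_nonneg hk0 ht0]
  have hBnn : (0:ℝ) ≤ 1 - k ^ 2 * t ^ 2 := by
    nlinarith [mul_nonneg hkt (by nlinarith [mul_nonneg hk0 ht0] : (0:ℝ) ≤ 1 + k * t)]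
  have hsq : Real.sqrt ((1 - t ^ 2) * (1 - k ^ 2 * t ^ 2)) ≤ 2 * (2 - k - t) := by
    have hsqle : (1 - t ^ 2) * (1 - k ^ 2 * t ^ 2) ≤ (2 * (2 - k - t)) ^ 2 := by
      calc (1 - t ^ 2) * (1 - k ^ 2 * t ^ 2) ≤ (2 * (2 - k - t)) * (1 - k ^ 2 * t ^ 2) :=
            mul_le_mul_of_nonneg_right hA hBnn
        _ ≤ (2 * (2 - k - t)) * (2 * (2 - k - t)) :=
            mul_le_mul_of_nonneg_left hB (by positivity)
        _ = (2 * (2 - k - t)) ^ 2 := by ring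
    calc Real.sqrt ((1 - t ^ 2) * (1 - k ^ 2 * t ^ 2)) ≤ Real.sqrt ((2 * (2 - k - t)) ^ 2) :=
          Real.sqrt_le_sqrt hsqle
      _ = 2 * (2 - k - t) := Real.sqrt_sq (by positivity)
  exact one_div_le_one_div_of_le (Real.sqrt_pos.2 hprod) hsq

lemma tendsto_within_of_cont {f : ℝ → ℝ} (hf : Continuous f) (a : ℝ) (s : Set ℝ) {y : ℝ}
    (h : f a = y) : Tendsto f (nhdsWithin a s) (nhds y) :=
  h ▸ (hf.tendsto a).mono_left nhdsWithin_le_nhds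

/-- For fixed `ω₀ > 0`, `T(β₂; ω₀) → +∞` as `β₂ → 0⁺` and
`T(β₂; ω₀) → √2 π/√ω₀` as `β₂ → (2ω₀)⁻`. -/
theorem stmt_7 (ω₀ : ℝ) (hω₀ : 0 < ω₀) :
    Tendsto (fun β₂ => periodT ω₀ β₂) (nhdsWithin 0 (Set.Ioi 0)) atTop ∧
      Tendsto (fun β₂ => periodT ω₀ β₂) (nhdsWithin (2 * ω₀) (Set.Iio (2 * ω₀)))
        (nhds (Real.sqrt 2 * Real.pi / Real.sqrt ω₀)) := by
  have h3ω : (0:ℝ) < 3 * ω₀ := by linarith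
  have hsqrt3ω : 0 < Real.sqrt (3 * ω₀) := Real.sqrt_pos.2 h3ω
  have hrho_cont : Continuous (rho ω₀) := by
    unfold rho
    exact Real.continuous_sqrt.comp (by continuity)
  have hmod_nonneg : ∀ β₂, 0 ≤ modulus ω₀ β₂ := fun β₂ => Real.sqrt_nonneg _
  constructor
  · -- β₂ → 0⁺
    have hrho_t : Tendsto (rho ω₀) (nhdsWithin 0 (Set.Ioi 0)) (nhds (3 * ω₀)) := by
      apply tendsto_within_of_cont hrho_cont
      unfold rho
      rw [show 9 * ω₀ ^ 2 - 3 * (0:ℝ) ^ 2 + 6 * ω₀ * 0 = (3 * ω₀) ^ 2 by ring,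
        Real.sqrt_sq h3ω.le]
    have hpre : Tendsto (fun β₂ => 2 * Real.sqrt 6 / Real.sqrt (rho ω₀ β₂))
        (nhdsWithin 0 (Set.Ioi 0)) (nhds (2 * Real.sqrt 6 / Real.sqrt (3 * ω₀))) :=
      tendsto_const_nhds.div ((Real.continuous_sqrt.tendsto _).comp hrho_t) (by positivity)
    have hmod_t : Tendsto (modulus ω₀) (nhdsWithin 0 (Set.Ioi 0)) (nhds 1) := by
      have h1 : Tendsto (fun β₂ : ℝ => 3 * (ω₀ - β₂)) (nhdsWithin 0 (Set.Ioi 0))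
          (nhds (3 * ω₀)) :=
        tendsto_within_of_cont (by continuity) 0 _ (by ring)
      have h2 : Tendsto (fun β₂ => 2 * rho ω₀ β₂) (nhdsWithin 0 (Set.Ioi 0))
          (nhds (2 * (3 * ω₀))) := tendsto_const_nhds.mul hrho_t
      have h3 : Tendsto (fun β₂ => 3 * (ω₀ - β₂) / (2 * rho ω₀ β₂)) (nhdsWithin 0 (Set.Ioi 0))
          (nhds (3 * ω₀ / (2 * (3 * ω₀)))) := h1.div h2 (by positivity)
      have h4 : Tendsto (fun β₂ => 1/2 + 3 * (ω₀ - β₂) / (2 * rho ω₀ β₂))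
          (nhdsWithin 0 (Set.Ioi 0)) (nhds (1/2 + 3 * ω₀ / (2 * (3 * ω₀)))) :=
        tendsto_const_nhds.add h3
      have hval : (1:ℝ)/2 + 3 * ω₀ / (2 * (3 * ω₀)) = 1 := by
        field_simp
        ring
      rw [hval] at h4
      have h5 := (Real.continuous_sqrt.tendsto 1).comp h4
      unfold modulus
      simpa [Real.sqrt_one, Function.comp_def] using h5
    have hev : ∀ᶠ β₂ in nhdsWithin (0:ℝ) (Set.Ioi 0), 0 < β₂ ∧ β₂ < 2 * ω₀ := by
      have h1 : ∀ᶠ β₂ in nhdsWithin (0:ℝ) (Set.Ioi 0), β₂ ∈ Set.Ioi (0:ℝ) :=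
        self_mem_nhdsWithin
      have h2 : Tendsto (fun β₂ : ℝ => β₂) (nhdsWithin (0:ℝ) (Set.Ioi 0)) (nhds 0) :=
        tendsto_id.mono_left nhdsWithin_le_nhds
      exact h1.and (h2.eventually_lt_const (by linarith))
    have hmod_lt1 : ∀ᶠ β₂ in nhdsWithin (0:ℝ) (Set.Ioi 0), modulus ω₀ β₂ < 1 := by
      filter_upwards [hev] with β₂ hb
      obtain ⟨hb0, hb2⟩ := hb
      have hρpos : 0 < rho ω₀ β₂ := Real.sqrt_pos.2 (by nlinarith)
      have hρlt : 3 * (ω₀ - β₂) < rho ω₀ β₂ := by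
        rcases le_or_gt (3 * (ω₀ - β₂)) 0 with h | h
        · linarith
        · unfold rho
          rw [Real.lt_sqrt h.le]
          nlinarith
      have h5 : 3 * (ω₀ - β₂) / (2 * rho ω₀ β₂) < 1/2 := by
        rw [div_lt_iff₀ (by positivity)]
        linarith
      unfold modulus
      rw [Real.sqrt_lt' one_pos]
      nlinarith
    have hmodIoi : Tendsto (modulus ω₀) (nhdsWithin (0:ℝ) (Set.Ioi 0))
        (nhdsWithin 1 (Set.Iio 1)) :=
      tendsto_nhdsWithin_of_tendsto_nhds_of_eventually_within _ hmod_t hmod_lt1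
    have hlog : Tendsto (fun x : ℝ => 1/2 * Real.log ((2 - x) / (1 - x)))
        (nhdsWithin 1 (Set.Iio 1)) atTop := by
      have h1 : Tendsto (fun x : ℝ => 1 - x) (nhdsWithin 1 (Set.Iio 1))
          (nhdsWithin 0 (Set.Ioi 0)) := by
        apply tendsto_nhdsWithin_of_tendsto_nhds_of_eventually_within
        · exact tendsto_within_of_cont (by continuity) 1 _ (by ring)
        · filter_upwards [self_mem_nhdsWithin] with x hx
          simp only [Set.mem_Iio] at hx
          simp only [Set.mem_Ioi]
          linarith
      have h2 : Tendsto (fun x : ℝ => (1 - x)⁻¹) (nhdsWithin 1 (Set.Iio 1)) atTop :=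
        tendsto_inv_nhdsGT_zero.comp h1
      have h3 : Tendsto (fun x : ℝ => 2 - x) (nhdsWithin 1 (Set.Iio 1)) (nhds 1) :=
        tendsto_within_of_cont (by continuity) 1 _ (by ring)
      have h4 : Tendsto (fun x : ℝ => (2 - x) * (1 - x)⁻¹) (nhdsWithin 1 (Set.Iio 1)) atTop :=
        Filter.Tendsto.pos_mul_atTop one_pos h3 h2
      have h5 := Real.tendsto_log_atTop.comp h4
      have h6 : Tendsto (fun x : ℝ => Real.log ((2 - x) / (1 - x)))
          (nhdsWithin 1 (Set.Iio 1)) atTop := by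
        simpa [Function.comp_def, div_eq_mul_inv] using h5
      exact (tendsto_const_mul_atTop_of_pos (by norm_num : (0:ℝ) < 1/2)).2 h6
    have hKtop : Tendsto (fun β₂ => ellipticK (modulus ω₀ β₂))
        (nhdsWithin (0:ℝ) (Set.Ioi 0)) atTop := by
      apply tendsto_atTop_mono' _ ?_ (hlog.comp hmodIoi)
      filter_upwards [hmod_lt1] with β₂ h1
      exact ellipticK_log_lower (hmod_nonneg β₂) h1
    have hfinal := Filter.Tendsto.pos_mul_atTop (by positivity :
      (0:ℝ) < 2 * Real.sqrt 6 / Real.sqrt (3 * ω₀)) hpre hKtop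
    simpa [periodT] using hfinal
  · -- β₂ → (2ω₀)⁻
    have hrho_t : Tendsto (rho ω₀) (nhdsWithin (2 * ω₀) (Set.Iio (2 * ω₀)))
        (nhds (3 * ω₀)) := by
      apply tendsto_within_of_cont hrho_cont
      unfold rho
      rw [show 9 * ω₀ ^ 2 - 3 * (2 * ω₀) ^ 2 + 6 * ω₀ * (2 * ω₀) = (3 * ω₀) ^ 2 by ring,
        Real.sqrt_sq h3ω.le]
    have hpre : Tendsto (fun β₂ => 2 * Real.sqrt 6 / Real.sqrt (rho ω₀ β₂))
        (nhdsWithin (2 * ω₀) (Set.Iio (2 * ω₀)))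
        (nhds (2 * Real.sqrt 6 / Real.sqrt (3 * ω₀))) :=
      tendsto_const_nhds.div ((Real.continuous_sqrt.tendsto _).comp hrho_t) (by positivity)
    have hmod_t : Tendsto (modulus ω₀) (nhdsWithin (2 * ω₀) (Set.Iio (2 * ω₀))) (nhds 0) := by
      have h1 : Tendsto (fun β₂ : ℝ => 3 * (ω₀ - β₂)) (nhdsWithin (2 * ω₀) (Set.Iio (2 * ω₀)))
          (nhds (3 * (ω₀ - 2 * ω₀))) :=
        tendsto_within_of_cont (by continuity) (2 * ω₀) _ rfl
      have h2 : Tendsto (fun β₂ => 2 * rho ω₀ β₂) (nhdsWithin (2 * ω₀) (Set.Iio (2 * ω₀)))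
          (nhds (2 * (3 * ω₀))) := tendsto_const_nhds.mul hrho_t
      have h3 : Tendsto (fun β₂ => 3 * (ω₀ - β₂) / (2 * rho ω₀ β₂))
          (nhdsWithin (2 * ω₀) (Set.Iio (2 * ω₀)))
          (nhds (3 * (ω₀ - 2 * ω₀) / (2 * (3 * ω₀)))) := h1.div h2 (by positivity)
      have h4 : Tendsto (fun β₂ => 1/2 + 3 * (ω₀ - β₂) / (2 * rho ω₀ β₂))
          (nhdsWithin (2 * ω₀) (Set.Iio (2 * ω₀)))
          (nhds (1/2 + 3 * (ω₀ - 2 * ω₀) / (2 * (3 * ω₀)))) := tendsto_const_nhds.add h3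
      have hval : (1:ℝ)/2 + 3 * (ω₀ - 2 * ω₀) / (2 * (3 * ω₀)) = 0 := by
        field_simp
        ring
      rw [hval] at h4
      have h5 := (Real.continuous_sqrt.tendsto 0).comp h4
      unfold modulus
      simpa [Real.sqrt_zero, Function.comp_def] using h5
    have hmod_lt1 : ∀ᶠ β₂ in nhdsWithin (2 * ω₀) (Set.Iio (2 * ω₀)), modulus ω₀ β₂ < 1 :=
      hmod_t.eventually_lt_const one_pos
    have hub : Tendsto (fun β₂ => π / 2 / Real.sqrt (1 - (modulus ω₀ β₂) ^ 2))
        (nhdsWithin (2 * ω₀) (Set.Iio (2 * ω₀))) (nhds (π / 2)) := by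
      have h1 : Tendsto (fun β₂ => 1 - (modulus ω₀ β₂) ^ 2)
          (nhdsWithin (2 * ω₀) (Set.Iio (2 * ω₀))) (nhds 1) := by
        have h0 : Tendsto (fun β₂ => 1 - (modulus ω₀ β₂) ^ 2)
            (nhdsWithin (2 * ω₀) (Set.Iio (2 * ω₀))) (nhds (1 - 0 ^ 2)) :=
          Tendsto.sub tendsto_const_nhds (hmod_t.pow 2)
        norm_num at h0
        exact h0
      have h2 : Tendsto (fun β₂ => Real.sqrt (1 - (modulus ω₀ β₂) ^ 2))
          (nhdsWithin (2 * ω₀) (Set.Iio (2 * ω₀))) (nhds 1) := by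
        have := (Real.continuous_sqrt.tendsto 1).comp h1
        simpa [Real.sqrt_one, Function.comp_def] using this
      have h3 : Tendsto (fun β₂ => π / 2 / Real.sqrt (1 - (modulus ω₀ β₂) ^ 2))
          (nhdsWithin (2 * ω₀) (Set.Iio (2 * ω₀))) (nhds (π / 2 / 1)) :=
        Tendsto.div tendsto_const_nhds h2 one_ne_zero
      simpa using h3
    have hK : Tendsto (fun β₂ => ellipticK (modulus ω₀ β₂))
        (nhdsWithin (2 * ω₀) (Set.Iio (2 * ω₀))) (nhds (π / 2)) := by
      apply tendsto_of_tendsto_of_tendsto_of_le_of_le' tendsto_const_nhds hub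
      · filter_upwards [hmod_lt1] with β₂ h
        exact ellipticK_ge_pi_div_two (hmod_nonneg β₂) h
      · filter_upwards [hmod_lt1] with β₂ h
        exact ellipticK_le_ub (hmod_nonneg β₂) h
    have hfinal := hpre.mul hK
    have hval : 2 * Real.sqrt 6 / Real.sqrt (3 * ω₀) * (π / 2)
        = Real.sqrt 2 * π / Real.sqrt ω₀ := by
      have h6 : Real.sqrt 6 = Real.sqrt 2 * Real.sqrt 3 := by
        rw [← Real.sqrt_mul (by norm_num : (0:ℝ) ≤ 2)]
        norm_num
      have h3ω' : Real.sqrt (3 * ω₀) = Real.sqrt 3 * Real.sqrt ω₀ :=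
        Real.sqrt_mul (by norm_num) _
      have hs3 : Real.sqrt 3 ≠ 0 := by positivity
      have hsω : Real.sqrt ω₀ ≠ 0 := by positivity
      rw [h6, h3ω']
      field_simp
    rw [← hval]
    simpa [periodT] using hfinal
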